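/- Let 1 ≤ p < ∞, q > p, and suppose K is a bounded linear operator from l^p(L^1(ℝ⁺)) to L^q(ℝ), given by integration against a bounded kernel on compactly supported functions. Suppose further there is a family of intervals {E(m,l) : m ≥ 1, 1 ≤ l ≤ 2^m} partitioning ℝ⁺ at each generation, ordered left to right, nested across generations, with ‖f χ_{E(m,l)}‖_{l^p(L^1)}^p ≤ 2^{-m} for all m, l (where ‖f‖_{l^p(L^1)} = 1). Then the maximal function M_K f(λ) = sup_N |K(f χ_{[0,N]})(λ)| satisfies ‖M_K f‖_q ≤ C_q ‖f‖_{l^p(L^1)}, where C_q depends only on p, q, and the operator norm of K. -/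

import Mathlib

open MeasureTheory Set
open scoped ENNReal

/-- The `p`-th power of the amalgam `l^p(L^1)` norm. -/
noncomputable def amalgP (p : ℝ) (f : ℝ → ℂ) : ℝ :=
  ∑' n : ℕ, (∫ x in Ioc (n : ℝ) (n + 1), ‖f x‖) ^ p

open MeasureTheory Set Filter
open scoped ENNReal NNReal Topology

lemma myFinsetLp {α : Type*} [MeasurableSpace α] {μ : Measure α} {q : ℝ}
    (hq : 1 ≤ q) {g : ℕ → α → ℝ≥0∞} (hg : ∀ n, AEMeasurable (g n) μ) (s : Finset ℕ) :
    (∫⁻ a, (∑ n ∈ s, g n a) ^ q ∂μ) ^ (1/q)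
      ≤ ∑ n ∈ s, (∫⁻ a, g n a ^ q ∂μ) ^ (1/q) := by
  classical
  have hq0 : 0 < q := lt_of_lt_of_le one_pos hq
  induction s using Finset.induction_on with
  | empty =>
      simp [ENNReal.zero_rpow_of_pos hq0,
        ENNReal.zero_rpow_of_pos (by positivity : (0:ℝ) < 1/q), hq0]
  | insert a s hns ih =>
      simp only [Finset.sum_insert hns]
      refine le_trans ?_ (add_le_add_right ih _)
      exact ENNReal.lintegral_Lp_add_le (hg a)
        (Finset.aemeasurable_fun_sum s fun i _ => hg i) hq

lemma myTsumLp {α : Type*} [MeasurableSpace α] {μ : Measure α} {q : ℝ}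
    (hq : 1 ≤ q) {g : ℕ → α → ℝ≥0∞} (hg : ∀ n, AEMeasurable (g n) μ) :
    (∫⁻ a, (∑' n, g n a) ^ q ∂μ) ^ (1/q) ≤ ∑' n, (∫⁻ a, g n a ^ q ∂μ) ^ (1/q) := by
  have hq0 : 0 < q := lt_of_lt_of_le one_pos hq
  have hpt : ∀ a, (∑' n, g n a) ^ q = ⨆ k : ℕ, (∑ n ∈ Finset.range k, g n a) ^ q := by
    intro a
    have hmono : Monotone fun k : ℕ => (∑ n ∈ Finset.range k, g n a) ^ q := fun i j hij =>
      ENNReal.rpow_le_rpow (Finset.sum_le_sum_of_subset (Finset.range_subset_range.2 hij)) hq0.le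
    have htt : Tendsto (fun k : ℕ => (∑ n ∈ Finset.range k, g n a) ^ q) atTop
        (𝓝 ((∑' n, g n a) ^ q)) :=
      (ENNReal.continuous_rpow_const.tendsto _).comp (ENNReal.tendsto_nat_tsum _)
    exact (tendsto_nhds_unique htt (tendsto_atTop_iSup hmono))
  calc (∫⁻ a, (∑' n, g n a) ^ q ∂μ) ^ (1/q)
      = (⨆ k : ℕ, ∫⁻ a, (∑ n ∈ Finset.range k, g n a) ^ q ∂μ) ^ (1/q) := by
        rw [← lintegral_iSup' (fun k => ((Finset.aemeasurable_fun_sum _ fun i _ => hg i).pow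
            aemeasurable_const)) (ae_of_all _ fun a i j hij =>
            ENNReal.rpow_le_rpow (Finset.sum_le_sum_of_subset (Finset.range_subset_range.2 hij)) hq0.le)]
        simp_rw [hpt]
    _ ≤ ((∑' n, (∫⁻ a, g n a ^ q ∂μ) ^ (1/q)) ^ q) ^ (1/q) := by
        refine ENNReal.rpow_le_rpow ?_ (by positivity)
        refine iSup_le fun k => ?_
        have h1 := myFinsetLp hq hg (Finset.range k)
        have h2 : (∫⁻ a, (∑ n ∈ Finset.range k, g n a) ^ q ∂μ)
            = ((∫⁻ a, (∑ n ∈ Finset.range k, g n a) ^ q ∂μ) ^ (1/q)) ^ q := by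
          rw [← ENNReal.rpow_mul, one_div, inv_mul_cancel₀ hq0.ne', ENNReal.rpow_one]
        rw [h2]
        exact le_trans (ENNReal.rpow_le_rpow h1 hq0.le)
          (ENNReal.rpow_le_rpow (ENNReal.sum_le_tsum _) hq0.le)
    _ = ∑' n, (∫⁻ a, g n a ^ q ∂μ) ^ (1/q) := by
        rw [← ENNReal.rpow_mul, mul_one_div, div_self hq0.ne', ENNReal.rpow_one]

lemma myIocCover : ∀ K : ℕ, Ioc (0:ℝ) K = ⋃ n ∈ Finset.range K, Ioc (n:ℝ) (n+1) := by
  intro K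
  induction K with
  | zero => simp
  | succ K ih =>
      rw [Finset.range_add_one]
      simp only [Finset.mem_insert, Set.iUnion_iUnion_eq_or_left]
      rw [← ih, Set.union_comm, Nat.cast_succ]
      exact (Set.Ioc_union_Ioc_eq_Ioc (by positivity) (by linarith [Nat.cast_nonneg (α := ℝ) K])).symm

lemma myIoiCover : Ioi (0:ℝ) = ⋃ n : ℕ, Ioc (n:ℝ) (n+1) := by
  ext x
  simp only [mem_Ioi, mem_iUnion]
  constructor
  · intro hx
    obtain ⟨K, hK⟩ := exists_nat_ge x
    have : x ∈ Ioc (0:ℝ) K := ⟨hx, hK⟩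
    rw [myIocCover K] at this
    simp only [mem_iUnion, Finset.mem_range, exists_prop] at this
    obtain ⟨i, _, hi⟩ := this
    exact ⟨i, hi⟩
  · rintro ⟨n, hn⟩
    exact lt_of_le_of_lt (Nat.cast_nonneg n) hn.1

/-- maximal function bound in amalgam spaces. Suppose `1 ≤ p < q < ∞`,
`K` is given by a bounded measurable kernel and is bounded from `l^p(L^1(ℝ⁺))` to
`L^q(ℝ)`, `f` has unit amalgam norm, and `{E(m,l)}` is an adapted family of
intervals partitioning `ℝ⁺` at each generation, ordered, nested across generations,
with `‖fχ_{E(m,l)}‖_{l^p(L^1)}^p ≤ 2^{-m}`. Then the maximal function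
`M_K f (λ) = sup_N |K(fχ_{[0,N]})(λ)|` satisfies `‖M_K f‖_q ≤ C_q ‖f‖_{l^p(L^1)}`. -/
theorem stmt12 (p q : ℝ) (hp : 1 ≤ p) (hpq : p < q)
    (k : ℝ → ℝ → ℂ) (hk : Measurable (Function.uncurry k))
    (B : ℝ) (hkB : ∀ l x, ‖k l x‖ ≤ B)
    (CK : ℝ≥0∞) (hCK : CK < ⊤)
    (hbound : ∀ g : ℝ → ℂ, (∀ n : ℕ, IntegrableOn g (Ioc (n : ℝ) (n + 1))) →
      Summable (fun n : ℕ => (∫ x in Ioc (n : ℝ) (n + 1), ‖g x‖) ^ p) →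
      eLpNorm (fun l => ∫ x in Ioi (0:ℝ), k l x * g x) (ENNReal.ofReal q) volume
        ≤ CK * ENNReal.ofReal ((amalgP p g) ^ (1 / p)))
    (f : ℝ → ℂ)
    (hloc : ∀ n : ℕ, IntegrableOn f (Ioc (n : ℝ) (n + 1)))
    (hsum : Summable (fun n : ℕ => (∫ x in Ioc (n : ℝ) (n + 1), ‖f x‖) ^ p))
    (hf1 : amalgP p f = 1)
    (E : ℕ → ℕ → Set ℝ)
    (hmeas : ∀ m l, MeasurableSet (E m l)) (hconn : ∀ m l, OrdConnected (E m l))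
    (hdisj : ∀ m, 1 ≤ m → ∀ l i, 1 ≤ l → l < i → i ≤ 2 ^ m → Disjoint (E m l) (E m i))
    (hcover : ∀ m, 1 ≤ m → (⋃ l ∈ Finset.Icc 1 (2 ^ m), E m l) = Ioi (0:ℝ))
    (horder : ∀ m, 1 ≤ m → ∀ l i, 1 ≤ l → l < i → i ≤ 2 ^ m →
      ∀ x ∈ E m l, ∀ y ∈ E m i, x ≤ y)
    (hsplit : ∀ m, 1 ≤ m → ∀ l, 1 ≤ l → l ≤ 2 ^ m →
      E (m + 1) (2 * l - 1) ∪ E (m + 1) (2 * l) = E m l)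
    (hmass : ∀ m, 1 ≤ m → ∀ l, 1 ≤ l → l ≤ 2 ^ m →
      amalgP p (indicator (E m l) f) ≤ (2:ℝ)⁻¹ ^ m) :
    ∃ Cq : ℝ≥0∞, Cq < ⊤ ∧
      eLpNorm (fun l => ⨆ N : ℝ, ‖∫ x in Ioc (0:ℝ) N, k l x * f x‖)
          (ENNReal.ofReal q) volume
        ≤ Cq * ENNReal.ofReal ((amalgP p f) ^ (1 / p)) := by
  classical
  have hp0 : (0:ℝ) < p := lt_of_lt_of_le one_pos hp
  have hq1 : (1:ℝ) ≤ q := hp.trans hpq.le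
  have hq0 : (0:ℝ) < q := lt_of_lt_of_le one_pos hq1
  have hB0 : 0 ≤ B := le_trans (norm_nonneg _) (hkB 0 0)
  -- E m i ⊆ Ioi 0
  have Esub : ∀ m i, 1 ≤ m → 1 ≤ i → i ≤ 2 ^ m → E m i ⊆ Ioi (0:ℝ) := by
    intro m i hm h1 h2
    rw [← hcover m hm]
    exact Set.subset_biUnion_of_mem (Finset.mem_Icc.2 ⟨h1, h2⟩)
  -- measurable version of f on Ioi 0
  have hfIoi : AEStronglyMeasurable f (volume.restrict (Ioi (0:ℝ))) := by
    rw [myIoiCover]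
    exact (aestronglyMeasurable_iUnion_iff).2 fun n => (hloc n).aestronglyMeasurable
  set f₀ : ℝ → ℂ := hfIoi.mk f with hf₀def
  have hf₀m : StronglyMeasurable f₀ := hfIoi.stronglyMeasurable_mk
  have hff₀ : f =ᵐ[volume.restrict (Ioi (0:ℝ))] f₀ := hfIoi.ae_eq_mk
  have hcongr : ∀ (l : ℝ) (S : Set ℝ), S ⊆ Ioi (0:ℝ) →
      ∫ x in S, k l x * f x = ∫ x in S, k l x * f₀ x := by
    intro l S hS
    refine integral_congr_ae ?_
    filter_upwards [ae_restrict_of_ae_restrict_of_subset hS hff₀] with x hx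
    rw [hx]
  -- measurability of the building blocks
  have hmeasI : ∀ m i, 1 ≤ m → 1 ≤ i → i ≤ 2 ^ m →
      Measurable (fun l => ∫ x in E m i, k l x * f x) := by
    intro m i hm h1 h2
    have heq : (fun l => ∫ x in E m i, k l x * f x)
        = fun l => ∫ x in E m i, k l x * f₀ x :=
      funext fun l => hcongr l _ (Esub m i hm h1 h2)
    rw [heq]
    have hsm : StronglyMeasurable (fun z : ℝ × ℝ => k z.1 z.2 * f₀ z.2) :=
      hk.stronglyMeasurable.mul (hf₀m.comp_measurable measurable_snd)
    exact (hsm.integral_prod_right' (ν := volume.restrict (E m i))).measurable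
  -- the generation-m maximal blocks
  set G : ℕ → ℝ → ℝ≥0∞ := fun m l =>
    (Finset.Icc 1 (2 ^ m)).sup fun i => ENNReal.ofReal ‖∫ x in E m i, k l x * f x‖
    with hGdef
  have hGmeas : ∀ m, 1 ≤ m → Measurable (G m) := by
    intro m hm
    have : G m = fun l => ⨆ i ∈ Finset.Icc 1 (2 ^ m),
        ENNReal.ofReal ‖∫ x in E m i, k l x * f x‖ :=
      funext fun l => Finset.sup_eq_iSup _ _
    rw [this]
    refine Measurable.iSup fun i => Measurable.iSup fun hi => ?_
    obtain ⟨h1, h2⟩ := Finset.mem_Icc.1 hi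
    exact ((hmeasI m i hm h1 h2).norm).ennreal_ofReal
  set H : ℝ → ℝ≥0∞ := fun l => ∑' j : ℕ, G (j + 1) l with hHdef
  -- uniform control on local L¹-masses of f restricted to E m i
  have hSumm : ∀ m i, Summable
      (fun n : ℕ => (∫ x in Ioc (n:ℝ) (n+1), ‖indicator (E m i) f x‖) ^ p) := by
    intro m i
    refine Summable.of_nonneg_of_le
      (fun n => Real.rpow_nonneg (integral_nonneg fun x => norm_nonneg _) p)
      (fun n => Real.rpow_le_rpow (integral_nonneg fun x => norm_nonneg _) ?_ hp0.le) hsum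
    exact integral_mono ((hloc n).indicator (hmeas m i)).norm (hloc n).norm
      (fun x => norm_indicator_le_norm_self f x)
  have hIntInd : ∀ m i (n : ℕ), IntegrableOn (indicator (E m i) f) (Ioc (n:ℝ) (n+1)) := by
    intro m i n
    exact (hloc n).indicator (hmeas m i)
  have hAn : ∀ m i, 1 ≤ m → 1 ≤ i → i ≤ 2 ^ m → ∀ n : ℕ,
      ∫ x in Ioc (n:ℝ) (n+1), ‖indicator (E m i) f x‖ ≤ ((2:ℝ)⁻¹ ^ m) ^ (1/p) := by
    intro m i hm h1 h2 n
    set a : ℝ := ∫ x in Ioc (n:ℝ) (n+1), ‖indicator (E m i) f x‖ with hadef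
    have ha0 : 0 ≤ a := integral_nonneg fun x => norm_nonneg _
    have hap : a ^ p ≤ (2:ℝ)⁻¹ ^ m := by
      refine le_trans ?_ (hmass m hm i h1 h2)
      exact Summable.le_tsum (hSumm m i) n
        (fun j _ => Real.rpow_nonneg (integral_nonneg fun x => norm_nonneg _) p)
    have : a = (a ^ p) ^ (1/p) := by
      rw [← Real.rpow_mul ha0, mul_one_div, div_self hp0.ne', Real.rpow_one]
    rw [this]
    exact Real.rpow_le_rpow (Real.rpow_nonneg ha0 p) hap (by positivity)
  -- the key pointwise estimate
  have hptwise : ∀ l N, ENNReal.ofReal ‖∫ x in Ioc (0:ℝ) N, k l x * f x‖ ≤ 2 * H l := by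
    intro l N
    rcases le_or_gt N 0 with hN | hN
    · rw [Set.Ioc_eq_empty (by exact not_lt.2 hN)]
      simp
    set K : ℕ := ⌈N⌉₊ with hKdef
    have hNK : N ≤ (K:ℝ) := Nat.le_ceil N
    have hfK : IntegrableOn f (Ioc (0:ℝ) K) := by
      rw [myIocCover K]
      exact integrableOn_finset_iUnion.2 fun n _ => hloc n
    have hkl : Measurable (k l) := hk.of_uncurry_left
    have hintK : IntegrableOn (fun x => k l x * f x) (Ioc (0:ℝ) K) :=
      Integrable.bdd_mul hfK hkl.aestronglyMeasurable.restrict (ae_of_all _ fun x => hkB l x)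
    have hintN : IntegrableOn (fun x => k l x * f x) (Ioc (0:ℝ) N) :=
      hintK.mono_set (Set.Ioc_subset_Ioc_right hNK)
    set U : ℕ → ℕ → Set ℝ := fun m c => ⋃ i ∈ Finset.Icc 1 c, E m i with hUdef
    have hUmeas : ∀ m c, MeasurableSet (U m c) := fun m c =>
      Finset.measurableSet_biUnion _ fun i _ => hmeas m i
    have hUmono : ∀ m {c c'}, c ≤ c' → U m c ⊆ U m c' := by
      intro m c c' hcc
      exact Set.biUnion_subset_biUnion_left (Finset.Icc_subset_Icc_right hcc)
    have hUsucc : ∀ m c, U m (c+1) = U m c ∪ E m (c+1) := by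
      intro m c
      have hins : Finset.Icc 1 (c+1) = insert (c+1) (Finset.Icc 1 c) := by
        ext j; simp only [Finset.mem_Icc, Finset.mem_insert]; omega
      show (⋃ i ∈ Finset.Icc 1 (c+1), E m i) = _
      rw [hins, Finset.set_biUnion_insert, Set.union_comm]
    have hU0 : ∀ m, U m 0 = ∅ := by
      intro m
      show (⋃ i ∈ Finset.Icc 1 0, E m i) = ∅
      simp
    set c : ℕ → ℕ := fun m => Nat.findGreatest (fun d => U m d ⊆ Ioc (0:ℝ) N) (2^m)
      with hcdef2
    have hcle : ∀ m, c m ≤ 2^m := fun m => Nat.findGreatest_le _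
    have hcP : ∀ m, U m (c m) ⊆ Ioc (0:ℝ) N := by
      intro m
      refine Nat.findGreatest_spec (P := fun d => U m d ⊆ Ioc (0:ℝ) N) (Nat.zero_le _) ?_
      show U m 0 ⊆ Ioc (0:ℝ) N
      rw [hU0]; exact Set.empty_subset _
    have hUsplit : ∀ m, 1 ≤ m → ∀ d, d ≤ 2^m → U (m+1) (2*d) = U m d := by
      intro m hm d
      induction d with
      | zero => intro _; simp [hU0]
      | succ d ih =>
          intro hd
          have hd' : d ≤ 2^m := le_trans (Nat.le_succ d) hd
          have h2 : 2*(d+1) = (2*d+1)+1 := by ring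
          rw [h2, hUsucc, hUsucc, Set.union_assoc, ih hd', hUsucc]
          congr 1
          have hs2 := hsplit m hm (d+1) (Nat.succ_le_succ (Nat.zero_le d)) hd
          have h3 : 2*(d+1)-1 = 2*d+1 := by omega
          rw [h3] at hs2
          rw [← hs2]
          have h4 : 2*d+1+1 = 2*(d+1) := by ring
          rw [h4]
    have hc2 : ∀ m, 1 ≤ m → 2 * c m ≤ c (m+1) := by
      intro m hm
      refine Nat.le_findGreatest ?_ ?_
      · calc 2 * c m ≤ 2 * 2^m := Nat.mul_le_mul_left 2 (hcle m)
          _ = 2^(m+1) := by rw [pow_succ]; ring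
      · show U (m+1) (2 * c m) ⊆ Ioc (0:ℝ) N
        rw [hUsplit m hm (c m) (hcle m)]; exact hcP m
    have hc3 : ∀ m, 1 ≤ m → c (m+1) ≤ 2 * c m + 1 := by
      intro m hm
      by_contra hcon
      push_neg at hcon
      have hle : c m + 1 ≤ 2^m := by
        have h5 := hcle (m+1); rw [pow_succ] at h5; omega
      have hP : U m (c m + 1) ⊆ Ioc (0:ℝ) N := by
        rw [← hUsplit m hm _ hle]
        exact le_trans (hUmono (m+1) (by omega)) (hcP (m+1))
      exact Nat.findGreatest_is_greatest (Nat.lt_succ_self (c m)) hle hP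
    have hsubU : ∀ m i, 1 ≤ i → i ≤ c m → E m i ⊆ Ioc (0:ℝ) N := by
      intro m i h1 h2
      refine le_trans ?_ (hcP m)
      intro x hx
      exact Set.mem_iUnion₂.2 ⟨i, Finset.mem_Icc.2 ⟨h1, h2⟩, hx⟩
    -- increment estimate
    have hstep : ∀ m, 1 ≤ m →
        ENNReal.ofReal ‖(∫ x in U (m+1) (c (m+1)), k l x * f x)
          - ∫ x in U m (c m), k l x * f x‖ ≤ G (m+1) l := by
      intro m hm
      have hcases : c (m+1) = 2 * c m ∨ c (m+1) = 2 * c m + 1 := by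
        have := hc2 m hm; have := hc3 m hm; omega
      have hUeq : U (m+1) (2 * c m) = U m (c m) := hUsplit m hm (c m) (hcle m)
      rcases hcases with hce | hce
      · rw [hce, hUeq]
        simp
      · rw [hce]
        have hsub1 : 2 * c m + 1 ≤ 2^(m+1) := by rw [← hce]; exact hcle (m+1)
        have hdisj2 : Disjoint (U m (c m)) (E (m+1) (2*c m + 1)) := by
          rw [← hUeq]
          rw [Set.disjoint_left]
          rintro x hx hx'
          simp only [hUdef, Set.mem_iUnion] at hx
          obtain ⟨i, hi, hxi⟩ := hx
          obtain ⟨hi1, hi2⟩ := Finset.mem_Icc.1 hi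
          exact Set.disjoint_left.1
            (hdisj (m+1) (by omega) i (2*c m+1) hi1 (by omega) hsub1) hxi hx'
        have hIU : IntegrableOn (fun x => k l x * f x) (U m (c m)) :=
          hintN.mono_set (hcP m)
        have hIE : IntegrableOn (fun x => k l x * f x) (E (m+1) (2*c m+1)) := by
          refine hintN.mono_set ?_
          refine le_trans ?_ (hcP (m+1))
          intro x hx
          exact Set.mem_iUnion₂.2 ⟨2*c m+1, Finset.mem_Icc.2 ⟨by omega, by omega⟩, hx⟩
        have hieq : ∫ x in U (m+1) (2*c m+1), k l x * f x
            = (∫ x in U m (c m), k l x * f x) + ∫ x in E (m+1) (2*c m+1), k l x * f x := by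
          rw [hUsucc, hUeq, setIntegral_union hdisj2 (hmeas _ _) hIU hIE]
        rw [hieq, add_sub_cancel_left]
        exact Finset.le_sup (f := fun i => ENNReal.ofReal ‖∫ x in E (m+1) i, k l x * f x‖)
          (Finset.mem_Icc.2 ⟨by omega, hsub1⟩)
    -- base estimate
    have hbase : ENNReal.ofReal ‖∫ x in U 1 (c 1), k l x * f x‖ ≤ 2 * G 1 l := by
      have hc1 : c 1 ≤ 2 := by
        have := hcle 1; norm_num at this; exact this
      have hmem : ∀ i, 1 ≤ i → i ≤ 2 → i ∈ Finset.Icc 1 (2^1) := by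
        intro i h1 h2; exact Finset.mem_Icc.2 ⟨h1, by norm_num; omega⟩
      rcases (by omega : c 1 = 0 ∨ c 1 = 1 ∨ c 1 = 2) with h | h | h
      · rw [h, hU0]
        simp
      · rw [h]
        have : U 1 1 = E 1 1 := by rw [hUsucc, hU0, Set.empty_union]
        rw [this]
        refine le_trans (Finset.le_sup
          (f := fun i => ENNReal.ofReal ‖∫ x in E 1 i, k l x * f x‖) (hmem 1 le_rfl one_le_two)) ?_
        exact le_mul_of_one_le_left zero_le one_le_two
      · rw [h]
        have hU12 : U 1 2 = E 1 1 ∪ E 1 2 := by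
          rw [hUsucc, hUsucc, hU0, Set.empty_union]
        have hIE1 : IntegrableOn (fun x => k l x * f x) (E 1 1) :=
          hintN.mono_set (hsubU 1 1 le_rfl (by omega))
        have hIE2 : IntegrableOn (fun x => k l x * f x) (E 1 2) :=
          hintN.mono_set (hsubU 1 2 one_le_two (by omega))
        rw [hU12, setIntegral_union (hdisj 1 le_rfl 1 2 le_rfl one_lt_two (by norm_num))
          (hmeas 1 2) hIE1 hIE2]
        refine le_trans (ENNReal.ofReal_le_ofReal (norm_add_le _ _)) ?_
        refine le_trans ENNReal.ofReal_add_le ?_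
        rw [two_mul]
        exact add_le_add
          (Finset.le_sup (f := fun i => ENNReal.ofReal ‖∫ x in E 1 i, k l x * f x‖)
            (hmem 1 le_rfl one_le_two))
          (Finset.le_sup (f := fun i => ENNReal.ofReal ‖∫ x in E 1 i, k l x * f x‖)
            (hmem 2 one_le_two le_rfl))
    -- telescoping
    have htel : ∀ M, 1 ≤ M → ENNReal.ofReal ‖∫ x in U M (c M), k l x * f x‖
        ≤ 2 * ∑ j ∈ Finset.range M, G (j+1) l := by
      intro M
      induction M with
      | zero => omega
      | succ M ih =>
          intro _
          rcases Nat.eq_zero_or_pos M with hM0 | hM1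
          · subst hM0
            simpa [Finset.sum_range_one] using hbase
          · have h1 := hstep M hM1
            have h2 := ih hM1
            have key : ENNReal.ofReal ‖∫ x in U (M+1) (c (M+1)), k l x * f x‖
                ≤ ENNReal.ofReal ‖(∫ x in U (M+1) (c (M+1)), k l x * f x)
                    - ∫ x in U M (c M), k l x * f x‖
                  + ENNReal.ofReal ‖∫ x in U M (c M), k l x * f x‖ := by
              refine le_trans (ENNReal.ofReal_le_ofReal ?_) ENNReal.ofReal_add_le
              calc ‖∫ x in U (M+1) (c (M+1)), k l x * f x‖
                  = ‖((∫ x in U (M+1) (c (M+1)), k l x * f x)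
                      - ∫ x in U M (c M), k l x * f x) + ∫ x in U M (c M), k l x * f x‖ := by
                    rw [sub_add_cancel]
                _ ≤ _ := norm_add_le _ _
            refine le_trans key ?_
            rw [Finset.sum_range_succ, mul_add]
            calc ENNReal.ofReal ‖(∫ x in U (M+1) (c (M+1)), k l x * f x)
                    - ∫ x in U M (c M), k l x * f x‖
                  + ENNReal.ofReal ‖∫ x in U M (c M), k l x * f x‖
                ≤ G (M+1) l + 2 * ∑ j ∈ Finset.range M, G (j+1) l := add_le_add h1 h2
              _ ≤ 2 * G (M+1) l + 2 * ∑ j ∈ Finset.range M, G (j+1) l :=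
                  add_le_add_left (le_mul_of_one_le_left zero_le one_le_two) _
              _ = 2 * ∑ j ∈ Finset.range M, G (j+1) l + 2 * G (M+1) l := by ring
    -- remainder estimate
    have hrem : ∀ M, 1 ≤ M →
        ENNReal.ofReal ‖(∫ x in Ioc (0:ℝ) N, k l x * f x) - ∫ x in U M (c M), k l x * f x‖
          ≤ ENNReal.ofReal (B * K * (((2:ℝ)⁻¹ ^ M) ^ (1/p))) := by
      intro M hM
      have hdiffeq : (∫ x in Ioc (0:ℝ) N, k l x * f x) - ∫ x in U M (c M), k l x * f x
          = ∫ x in Ioc (0:ℝ) N \ U M (c M), k l x * f x :=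
        (integral_diff (hUmeas M (c M)) hintN (hcP M)).symm
      rw [hdiffeq]
      rcases Nat.lt_or_ge (c M) (2^M) with hcM | hcM
      · -- main case : remainder inside E M (c M + 1)
        have hDsub : Ioc (0:ℝ) N \ U M (c M) ⊆ E M (c M + 1) ∩ Ioc (0:ℝ) N := by
          rintro x ⟨hx1, hx2⟩
          have hx0 : x ∈ Ioi (0:ℝ) := hx1.1
          rw [← hcover M hM] at hx0
          simp only [Set.mem_iUnion] at hx0
          obtain ⟨i, hi, hxi⟩ := hx0
          obtain ⟨hi1, hi2⟩ := Finset.mem_Icc.1 hi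
          have hic : c M < i := by
            by_contra hle
            push_neg at hle
            exact hx2 (Set.mem_iUnion₂.2 ⟨i, Finset.mem_Icc.2 ⟨hi1, hle⟩, hxi⟩)
          have hieq : i = c M + 1 := by
            by_contra hne
            have hi3 : c M + 1 < i := by omega
            have hnP : ¬ (U M (c M + 1) ⊆ Ioc (0:ℝ) N) :=
              Nat.findGreatest_is_greatest (Nat.lt_succ_self _) hcM
            obtain ⟨y, hy1, hy2⟩ := Set.not_subset.1 hnP
            have hyE : y ∈ E M (c M + 1) := by
              rw [hUsucc] at hy1
              rcases hy1 with hy1 | hy1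
              · exact absurd (hcP M hy1) hy2
              · exact hy1
            have hy0 : (0:ℝ) < y := Esub M (c M + 1) hM (by omega) hcM hyE
            have hyN : N < y := by
              by_contra hyN'; push_neg at hyN'
              exact hy2 ⟨hy0, hyN'⟩
            have hyx := horder M hM (c M + 1) i (by omega) hi3 hi2 y hyE x hxi
            exact absurd hx1.2 (not_le.2 (lt_of_lt_of_le hyN hyx))
          exact ⟨hieq ▸ hxi, hx1⟩
        have hDK : Ioc (0:ℝ) N \ U M (c M) ⊆ E M (c M + 1) ∩ Ioc (0:ℝ) (K:ℝ) :=
          le_trans hDsub (Set.inter_subset_inter_right _ (Set.Ioc_subset_Ioc_right hNK))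
        have hintEK : IntegrableOn (fun x => ‖f x‖) (E M (c M + 1) ∩ Ioc (0:ℝ) (K:ℝ)) :=
          IntegrableOn.mono_set (hfK.norm) Set.inter_subset_right
        have hnormle : ‖∫ x in Ioc (0:ℝ) N \ U M (c M), k l x * f x‖
            ≤ B * ∫ x in E M (c M + 1) ∩ Ioc (0:ℝ) (K:ℝ), ‖f x‖ := by
          refine le_trans (norm_integral_le_integral_norm _) ?_
          have hst1 : ∫ x in Ioc (0:ℝ) N \ U M (c M), ‖k l x * f x‖
              ≤ ∫ x in Ioc (0:ℝ) N \ U M (c M), B * ‖f x‖ := by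
            refine integral_mono ((hintN.mono_set Set.diff_subset).norm) ?_ ?_
            · have hfN : IntegrableOn f (Ioc (0:ℝ) N) :=
                hfK.mono_set (Set.Ioc_subset_Ioc_right hNK)
              exact IntegrableOn.mono_set ((hfN.norm).const_mul B) Set.diff_subset
            · intro x
              show ‖k l x * f x‖ ≤ B * ‖f x‖
              rw [norm_mul]
              exact mul_le_mul_of_nonneg_right (hkB l x) (norm_nonneg _)
          refine le_trans hst1 ?_
          rw [integral_const_mul]
          refine mul_le_mul_of_nonneg_left ?_ hB0
          refine setIntegral_mono_set hintEK
            (Filter.Eventually.of_forall fun x => norm_nonneg _) ?_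
          exact HasSubset.Subset.eventuallyLE hDK
        have hsum2 : ∫ x in E M (c M + 1) ∩ Ioc (0:ℝ) (K:ℝ), ‖f x‖
            ≤ (K:ℝ) * (((2:ℝ)⁻¹ ^ M) ^ (1/p)) := by
          have hdecomp : E M (c M + 1) ∩ Ioc (0:ℝ) (K:ℝ)
              = ⋃ n ∈ Finset.range K, E M (c M + 1) ∩ Ioc (n:ℝ) (n+1) := by
            rw [myIocCover K, Set.inter_iUnion₂]
          rw [hdecomp, integral_biUnion_finset]
          · have hterm : ∀ n ∈ Finset.range K,
                ∫ x in E M (c M + 1) ∩ Ioc (n:ℝ) (n+1), ‖f x‖ ≤ ((2:ℝ)⁻¹ ^ M) ^ (1/p) := by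
              intro n _
              have heq2 : ∫ x in E M (c M + 1) ∩ Ioc (n:ℝ) (n+1), ‖f x‖
                  = ∫ x in Ioc (n:ℝ) (n+1), ‖indicator (E M (c M + 1)) f x‖ := by
                simp_rw [norm_indicator_eq_indicator_norm]
                rw [setIntegral_indicator (hmeas M (c M + 1)), Set.inter_comm]
              rw [heq2]
              exact hAn M (c M + 1) hM (by omega) hcM n
            calc ∑ n ∈ Finset.range K, ∫ x in E M (c M + 1) ∩ Ioc (n:ℝ) (n+1), ‖f x‖
                ≤ ∑ _n ∈ Finset.range K, ((2:ℝ)⁻¹ ^ M) ^ (1/p) := Finset.sum_le_sum hterm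
              _ = (K:ℝ) * (((2:ℝ)⁻¹ ^ M) ^ (1/p)) := by
                  rw [Finset.sum_const, Finset.card_range, nsmul_eq_mul]
          · exact fun n _ => (hmeas M (c M+1)).inter measurableSet_Ioc
          · intro a ha b hb hab
            have hIoc : Disjoint (Ioc (a:ℝ) (a+1)) (Ioc (b:ℝ) (b+1)) := by
              refine Set.Ioc_disjoint_Ioc.2 ?_
              rcases Nat.lt_or_ge a b with h | h
              · have hab2 : (a:ℝ) + 1 ≤ b := by exact_mod_cast Nat.succ_le_of_lt h
                exact le_trans (min_le_left _ _) (le_trans hab2 (le_max_right _ _))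
              · have h' : b < a := lt_of_le_of_ne h (Ne.symm hab)
                have hab2 : (b:ℝ) + 1 ≤ a := by exact_mod_cast Nat.succ_le_of_lt h'
                exact le_trans (min_le_right _ _) (le_trans hab2 (le_max_left _ _))
            exact hIoc.mono Set.inter_subset_right Set.inter_subset_right
          · exact fun n _ => IntegrableOn.mono_set ((hloc n).norm) Set.inter_subset_right
        refine ENNReal.ofReal_le_ofReal ?_
        calc ‖∫ x in Ioc (0:ℝ) N \ U M (c M), k l x * f x‖
            ≤ B * ∫ x in E M (c M + 1) ∩ Ioc (0:ℝ) (K:ℝ), ‖f x‖ := hnormle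
          _ ≤ B * ((K:ℝ) * (((2:ℝ)⁻¹ ^ M) ^ (1/p))) := mul_le_mul_of_nonneg_left hsum2 hB0
          _ = B * K * (((2:ℝ)⁻¹ ^ M) ^ (1/p)) := by ring
      · -- degenerate case : everything is covered
        have hceq : c M = 2^M := le_antisymm (hcle M) hcM
        have hUtop : U M (c M) = Ioi (0:ℝ) := by
          rw [hceq]
          exact hcover M hM
        have : Ioc (0:ℝ) N \ U M (c M) = ∅ := by
          rw [hUtop, Set.diff_eq_empty]
          exact Set.Ioc_subset_Ioi_self
        rw [this]
        simp only [Measure.restrict_empty, integral_zero_measure, norm_zero, ENNReal.ofReal_zero]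
        exact zero_le
    -- pass to the limit
    have hfinal : ∀ M : ℕ, 1 ≤ M → ENNReal.ofReal ‖∫ x in Ioc (0:ℝ) N, k l x * f x‖
        ≤ ENNReal.ofReal (B * K * (((2:ℝ)⁻¹ ^ M) ^ (1/p))) + 2 * H l := by
      intro M hM
      have hkey : ENNReal.ofReal ‖∫ x in Ioc (0:ℝ) N, k l x * f x‖
          ≤ ENNReal.ofReal ‖(∫ x in Ioc (0:ℝ) N, k l x * f x) - ∫ x in U M (c M), k l x * f x‖
            + ENNReal.ofReal ‖∫ x in U M (c M), k l x * f x‖ := by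
        refine le_trans (ENNReal.ofReal_le_ofReal ?_) ENNReal.ofReal_add_le
        calc ‖∫ x in Ioc (0:ℝ) N, k l x * f x‖
            = ‖((∫ x in Ioc (0:ℝ) N, k l x * f x) - ∫ x in U M (c M), k l x * f x)
                + ∫ x in U M (c M), k l x * f x‖ := by rw [sub_add_cancel]
          _ ≤ _ := norm_add_le _ _
      refine le_trans hkey (add_le_add (hrem M hM) ?_)
      refine le_trans (htel M hM) ?_
      exact mul_le_mul_right (ENNReal.sum_le_tsum (Finset.range M)) 2
    have hrM : ∀ M : ℕ, (((2:ℝ)⁻¹ ^ M) ^ ((1:ℝ)/p)) = (((2:ℝ)⁻¹) ^ ((1:ℝ)/p)) ^ M := by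
      intro M
      rw [← Real.rpow_natCast ((2:ℝ)⁻¹) M, ← Real.rpow_mul (by norm_num), mul_comm,
        Real.rpow_mul (by norm_num), Real.rpow_natCast]
    have hr0 : (0:ℝ) ≤ ((2:ℝ)⁻¹) ^ ((1:ℝ)/p) := Real.rpow_nonneg (by norm_num) _
    have hr1 : ((2:ℝ)⁻¹) ^ ((1:ℝ)/p) < 1 :=
      Real.rpow_lt_one (by norm_num) (by norm_num) (by positivity)
    have hconv : Filter.Tendsto
        (fun M : ℕ => ENNReal.ofReal (B * K * (((2:ℝ)⁻¹ ^ M) ^ (1/p))) + 2 * H l)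
        Filter.atTop (nhds (0 + 2 * H l)) := by
      refine Filter.Tendsto.add ?_ tendsto_const_nhds
      have h0 : Filter.Tendsto (fun M : ℕ => B * K * ((((2:ℝ)⁻¹) ^ ((1:ℝ)/p)) ^ M))
          Filter.atTop (nhds (B * K * 0)) :=
        (tendsto_pow_atTop_nhds_zero_of_lt_one hr0 hr1).const_mul (B * (K:ℝ))
      rw [mul_zero] at h0
      have h1 := ENNReal.tendsto_ofReal h0
      rw [ENNReal.ofReal_zero] at h1
      simpa only [hrM] using h1
    have := ge_of_tendsto hconv (Filter.eventually_atTop.2 ⟨1, fun M hM => hfinal M hM⟩)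
    rwa [zero_add] at this
  -- the per-generation norm estimate
  have hGq : ∀ m, 1 ≤ m → (∫⁻ l, (G m l) ^ q) ^ (1/q)
      ≤ ((2:ℝ≥0∞) ^ m) ^ (1/q) * (CK * ENNReal.ofReal (((2:ℝ)⁻¹ ^ m) ^ (1/p))) := by
    intro m hm
    set c : ℝ≥0∞ := CK * ENNReal.ofReal (((2:ℝ)⁻¹ ^ m) ^ (1/p)) with hcdef
    have key : ∀ i ∈ Finset.Icc 1 (2 ^ m),
        ∫⁻ l, (ENNReal.ofReal ‖∫ x in E m i, k l x * f x‖) ^ q ≤ c ^ q := by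
      intro i hi
      obtain ⟨h1, h2⟩ := Finset.mem_Icc.1 hi
      have hb := hbound (indicator (E m i) f) (hIntInd m i) (hSumm m i)
      have heq : (fun l => ∫ x in Ioi (0:ℝ), k l x * indicator (E m i) f x)
          = fun l => ∫ x in E m i, k l x * f x := by
        funext l
        have h1' : ∀ x, k l x * indicator (E m i) f x
            = indicator (E m i) (fun x => k l x * f x) x := by
          intro x; by_cases hx : x ∈ E m i <;> simp [Set.indicator, hx]
        simp_rw [h1']
        rw [setIntegral_indicator (hmeas m i),
          Set.inter_eq_self_of_subset_right (Esub m i hm h1 h2)]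
      rw [heq] at hb
      have hel : eLpNorm (fun l => ∫ x in E m i, k l x * f x) (ENNReal.ofReal q) volume
          = (∫⁻ l, (ENNReal.ofReal ‖∫ x in E m i, k l x * f x‖) ^ q) ^ (1/q) := by
        rw [eLpNorm_eq_eLpNorm' (by simp [ENNReal.ofReal_eq_zero]; linarith)
          ENNReal.ofReal_ne_top, ENNReal.toReal_ofReal hq0.le]
        simp_rw [eLpNorm', ofReal_norm]
      have hb2 : eLpNorm (fun l => ∫ x in E m i, k l x * f x) (ENNReal.ofReal q) volume ≤ c := by
        refine hb.trans ?_
        rw [hcdef]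
        refine mul_le_mul_right (ENNReal.ofReal_le_ofReal ?_) _
        exact Real.rpow_le_rpow
          (tsum_nonneg fun j => Real.rpow_nonneg (integral_nonneg fun x => norm_nonneg _) p)
          (hmass m hm i h1 h2) (by positivity)
      rw [hel] at hb2
      calc ∫⁻ l, (ENNReal.ofReal ‖∫ x in E m i, k l x * f x‖) ^ q
          = ((∫⁻ l, (ENNReal.ofReal ‖∫ x in E m i, k l x * f x‖) ^ q) ^ (1/q)) ^ q := by
            rw [← ENNReal.rpow_mul, one_div, inv_mul_cancel₀ hq0.ne', ENNReal.rpow_one]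
        _ ≤ c ^ q := ENNReal.rpow_le_rpow hb2 hq0.le
    have hpt : ∀ l, G m l ^ q
        ≤ ∑ i ∈ Finset.Icc 1 (2 ^ m), (ENNReal.ofReal ‖∫ x in E m i, k l x * f x‖) ^ q := by
      intro l
      obtain ⟨i0, hi0mem, hi0⟩ := Finset.exists_mem_eq_sup (Finset.Icc 1 (2 ^ m))
        (Finset.nonempty_Icc.2 Nat.one_le_two_pow)
        (fun i => ENNReal.ofReal ‖∫ x in E m i, k l x * f x‖)
      have : G m l = ENNReal.ofReal ‖∫ x in E m i0, k l x * f x‖ := hi0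
      rw [this]
      exact Finset.single_le_sum (f := fun i => (ENNReal.ofReal ‖∫ x in E m i, k l x * f x‖) ^ q)
        (fun i _ => zero_le) hi0mem
    calc (∫⁻ l, G m l ^ q) ^ (1/q)
        ≤ (∑ i ∈ Finset.Icc 1 (2 ^ m),
            ∫⁻ l, (ENNReal.ofReal ‖∫ x in E m i, k l x * f x‖) ^ q) ^ (1/q) := by
          refine ENNReal.rpow_le_rpow ?_ (by positivity)
          refine le_trans (lintegral_mono hpt) ?_
          rw [lintegral_finset_sum]
          intro i hi
          obtain ⟨h1, h2⟩ := Finset.mem_Icc.1 hi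
          exact (((hmeasI m i hm h1 h2).norm).ennreal_ofReal).pow_const q
      _ ≤ ((2 ^ m : ℕ) • c ^ q) ^ (1/q) := by
          refine ENNReal.rpow_le_rpow ?_ (by positivity)
          have := Finset.sum_le_card_nsmul (Finset.Icc 1 (2 ^ m))
            (fun i => ∫⁻ l, (ENNReal.ofReal ‖∫ x in E m i, k l x * f x‖) ^ q) (c ^ q) key
          simpa [Nat.card_Icc] using this
      _ = ((2:ℝ≥0∞) ^ m) ^ (1/q) * c := by
          rw [nsmul_eq_mul, ENNReal.mul_rpow_of_nonneg _ _ (by positivity : (0:ℝ) ≤ 1/q),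
            ← ENNReal.rpow_mul, mul_one_div, div_self hq0.ne', ENNReal.rpow_one]
          norm_num
  -- bound on the enorm of the maximal function
  have hMf : ∀ l : ℝ, ((‖(⨆ N : ℝ, ‖∫ x in Ioc (0:ℝ) N, k l x * f x‖)‖₊ : ℝ≥0) : ℝ≥0∞)
      ≤ 2 * H l := by
    intro l
    have hnn : 0 ≤ ⨆ N : ℝ, ‖∫ x in Ioc (0:ℝ) N, k l x * f x‖ :=
      Real.iSup_nonneg fun N => norm_nonneg _
    rw [← enorm_eq_nnnorm, ← ofReal_norm, Real.norm_of_nonneg hnn]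
    rcases eq_or_ne (2 * H l) ⊤ with htop | htop
    · rw [htop]; exact le_top
    · have hub : ∀ N : ℝ, ‖∫ x in Ioc (0:ℝ) N, k l x * f x‖ ≤ (2 * H l).toReal := by
        intro N
        exact (ENNReal.ofReal_le_iff_le_toReal htop).1 (hptwise l N)
      refine le_trans (ENNReal.ofReal_le_ofReal (Real.iSup_le hub ENNReal.toReal_nonneg)) ?_
      exact ENNReal.ofReal_toReal_le
  -- the geometric constant
  set s : ℝ≥0∞ := ENNReal.ofReal ((2:ℝ) ^ ((1:ℝ)/q - 1/p)) with hsdef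
  have hs1 : s < 1 := by
    rw [hsdef, ← ENNReal.ofReal_one]
    refine (ENNReal.ofReal_lt_ofReal_iff one_pos).2 ?_
    refine Real.rpow_lt_one_of_one_lt_of_neg one_lt_two ?_
    have : (1:ℝ)/q < 1/p := by
      rw [div_lt_div_iff₀ hq0 hp0]
      linarith
    linarith
  have hbnd : ∀ m : ℕ, ((2:ℝ≥0∞) ^ m) ^ ((1:ℝ)/q)
      * (CK * ENNReal.ofReal (((2:ℝ)⁻¹ ^ m) ^ ((1:ℝ)/p))) = CK * s ^ m := by
    intro m
    have e1 : ((2:ℝ≥0∞) ^ m) ^ ((1:ℝ)/q) = ENNReal.ofReal (((2:ℝ) ^ ((1:ℝ)/q)) ^ m) := by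
      calc ((2:ℝ≥0∞) ^ m) ^ ((1:ℝ)/q)
          = (ENNReal.ofReal ((2:ℝ) ^ m)) ^ ((1:ℝ)/q) := by
            rw [ENNReal.ofReal_pow (by norm_num)]
            norm_num
        _ = ENNReal.ofReal (((2:ℝ) ^ m) ^ ((1:ℝ)/q)) := by
            rw [← ENNReal.ofReal_rpow_of_pos (by positivity)]
        _ = ENNReal.ofReal (((2:ℝ) ^ ((1:ℝ)/q)) ^ m) := by
            rw [← Real.rpow_natCast (2:ℝ) m, ← Real.rpow_mul (by norm_num), mul_comm,
              Real.rpow_mul (by norm_num), Real.rpow_natCast]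
    have e2 : (((2:ℝ)⁻¹ ^ m) ^ ((1:ℝ)/p)) = ((2:ℝ)⁻¹ ^ ((1:ℝ)/p)) ^ m := by
      rw [← Real.rpow_natCast ((2:ℝ)⁻¹) m, ← Real.rpow_mul (by norm_num), mul_comm,
        Real.rpow_mul (by norm_num), Real.rpow_natCast]
    have e3 : ((2:ℝ) ^ ((1:ℝ)/q)) * ((2:ℝ)⁻¹ ^ ((1:ℝ)/p)) = (2:ℝ) ^ ((1:ℝ)/q - 1/p) := by
      rw [Real.inv_rpow (by norm_num), ← Real.rpow_neg (by norm_num),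
        ← Real.rpow_add two_pos]
      ring_nf
    calc ((2:ℝ≥0∞) ^ m) ^ ((1:ℝ)/q) * (CK * ENNReal.ofReal (((2:ℝ)⁻¹ ^ m) ^ ((1:ℝ)/p)))
        = CK * (ENNReal.ofReal (((2:ℝ) ^ ((1:ℝ)/q)) ^ m)
            * ENNReal.ofReal (((2:ℝ)⁻¹ ^ ((1:ℝ)/p)) ^ m)) := by
          rw [e1, e2]; ring
      _ = CK * ENNReal.ofReal ((((2:ℝ) ^ ((1:ℝ)/q)) * ((2:ℝ)⁻¹ ^ ((1:ℝ)/p))) ^ m) := by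
          rw [← ENNReal.ofReal_mul (by positivity), ← mul_pow]
      _ = CK * s ^ m := by
          rw [e3, hsdef, ← ENNReal.ofReal_pow (by positivity)]
  refine ⟨2 * (CK * (1 - s)⁻¹), ?_, ?_⟩
  · refine ENNReal.mul_lt_top (by norm_num) ?_
    exact ENNReal.mul_lt_top hCK (ENNReal.inv_lt_top.2 (tsub_pos_of_lt hs1))
  · rw [hf1, Real.one_rpow, ENNReal.ofReal_one, mul_one]
    have hel : eLpNorm (fun l => ⨆ N : ℝ, ‖∫ x in Ioc (0:ℝ) N, k l x * f x‖)
        (ENNReal.ofReal q) volume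
        = (∫⁻ l, ((‖(⨆ N : ℝ, ‖∫ x in Ioc (0:ℝ) N, k l x * f x‖)‖₊ : ℝ≥0) : ℝ≥0∞) ^ q) ^ (1/q) := by
      rw [eLpNorm_eq_eLpNorm' (by simp [ENNReal.ofReal_eq_zero]; linarith) ENNReal.ofReal_ne_top,
        ENNReal.toReal_ofReal hq0.le]
      rfl
    rw [hel]
    calc (∫⁻ l, ((‖(⨆ N : ℝ, ‖∫ x in Ioc (0:ℝ) N, k l x * f x‖)‖₊ : ℝ≥0) : ℝ≥0∞) ^ q) ^ (1/q)
        ≤ (∫⁻ l, (2 * H l) ^ q) ^ (1/q) :=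
          ENNReal.rpow_le_rpow
            (lintegral_mono fun l => ENNReal.rpow_le_rpow (hMf l) hq0.le) (by positivity)
      _ = 2 * (∫⁻ l, (H l) ^ q) ^ (1/q) := by
          simp_rw [ENNReal.mul_rpow_of_nonneg _ _ hq0.le]
          rw [lintegral_const_mul' _ _ (ENNReal.rpow_lt_top_of_nonneg hq0.le (by norm_num)).ne,
            ENNReal.mul_rpow_of_nonneg _ _ (by positivity : (0:ℝ) ≤ 1/q),
            ← ENNReal.rpow_mul, mul_one_div, div_self hq0.ne', ENNReal.rpow_one]
      _ ≤ 2 * ∑' j : ℕ, (∫⁻ l, (G (j+1) l) ^ q) ^ (1/q) := by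
          refine mul_le_mul_right ?_ 2
          exact myTsumLp hq1 (fun j => (hGmeas (j+1) (by omega)).aemeasurable)
      _ ≤ 2 * ∑' j : ℕ, CK * s ^ (j+1) := by
          refine mul_le_mul_right (ENNReal.tsum_le_tsum fun j => ?_) 2
          rw [← hbnd (j+1)]
          exact hGq (j+1) (by omega)
      _ ≤ 2 * (CK * (1 - s)⁻¹) := by
          refine mul_le_mul_right ?_ 2
          calc ∑' j : ℕ, CK * s ^ (j+1) = CK * ∑' j : ℕ, s ^ (j+1) := ENNReal.tsum_mul_left
            _ ≤ CK * ∑' j : ℕ, s ^ j := by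
                refine mul_le_mul_right (ENNReal.tsum_le_tsum fun j => ?_) CK
                exact pow_le_pow_of_le_one zero_le hs1.le (Nat.le_succ j)
            _ = CK * (1 - s)⁻¹ := by rw [ENNReal.tsum_geometric]
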